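/- There is a constant C > 0 such that for every real x ≥ 0, |Ai(x)| ≤ C e^{−(2/3) x^{3/2}}. -/

import Mathlib

/-!
With `φ(z) = z³/3 - x z`, the integrand of `Ai x` is
`e^{iπ/3} exp φ(s + e^{iπ/3} u) - e^{-iπ/3} exp φ(s + e^{-iπ/3} u)` at `s = 0`. Its integral over
`u > 0` does not depend on `s`: the `s`-derivative of the integrand is the `u`-derivative of
`exp φ(s + e^{iπ/3} u) - exp φ(s + e^{-iπ/3} u)`, which vanishes at `u = 0` and decays as `u → ∞`.
Moving the two rays to the saddle point `s = √x`, where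
`Re φ(√x + e^{±iπ/3} u) = -(2/3) x^{3/2} - √x u²/2 - u³/3`, gives the bound.
-/

open MeasureTheory Set Complex

/-- `e^{iπ/3}`. -/
noncomputable def eP : ℂ := Complex.exp (Real.pi / 3 * Complex.I)

/-- `e^{-iπ/3}`. -/
noncomputable def eM : ℂ := Complex.exp (-(Real.pi / 3) * Complex.I)

/-- The Airy function `Ai(x)`. -/
noncomputable def Ai (x : ℝ) : ℂ :=
  (2 * Real.pi * Complex.I)⁻¹ *
    ∫ u in Ioi (0 : ℝ),
      (eP * Complex.exp (-(u : ℂ) ^ 3 / 3 - x * (eP * u))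
        - eM * Complex.exp (-(u : ℂ) ^ 3 / 3 - x * (eM * u)))

open Filter Topology

lemma eP_re : eP.re = 1 / 2 := by
  rw [eP, ← Complex.ofReal_ofNat, ← Complex.ofReal_div, Complex.exp_ofReal_mul_I_re,
    Real.cos_pi_div_three]

lemma eP_im_sq : eP.im ^ 2 = 3 / 4 := by
  rw [eP, ← Complex.ofReal_ofNat, ← Complex.ofReal_div, Complex.exp_ofReal_mul_I_im,
    Real.sin_pi_div_three, div_pow, Real.sq_sqrt (by norm_num)]
  norm_num

lemma eM_re : eM.re = 1 / 2 := by
  rw [eM, ← Complex.ofReal_ofNat, ← Complex.ofReal_div, ← Complex.ofReal_neg,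
    Complex.exp_ofReal_mul_I_re, Real.cos_neg, Real.cos_pi_div_three]

lemma eM_im_sq : eM.im ^ 2 = 3 / 4 := by
  rw [eM, ← Complex.ofReal_ofNat, ← Complex.ofReal_div, ← Complex.ofReal_neg,
    Complex.exp_ofReal_mul_I_im, Real.sin_neg, Real.sin_pi_div_three, neg_sq, div_pow,
    Real.sq_sqrt (by norm_num)]
  norm_num

lemma norm_eq_one_of_re_eq_half {c : ℂ} (hre : c.re = 1 / 2) (him : c.im ^ 2 = 3 / 4) :
    ‖c‖ = 1 := by
  rw [Complex.norm_eq_sqrt_sq_add_sq, hre, him]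
  norm_num

lemma pow_three_eq_neg_one_of_re_eq_half {c : ℂ} (hre : c.re = 1 / 2)
    (him : c.im ^ 2 = 3 / 4) : c ^ 3 = -1 := by
  apply Complex.ext <;> simp only [pow_succ, pow_zero, one_mul, Complex.mul_re, Complex.mul_im,
    hre, Complex.neg_re, Complex.neg_im, Complex.one_re, Complex.one_im]
  · linear_combination (-3 / 2 : ℝ) * him
  · linear_combination (-c.im) * him

noncomputable def airyPhase (x : ℝ) (z : ℂ) : ℂ := z ^ 3 / 3 - x * z

noncomputable def airyPhaseRe (x s u : ℝ) : ℝ :=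
  s ^ 3 / 3 + s ^ 2 * u / 2 - s * u ^ 2 / 2 - x * s - x * u / 2 - u ^ 3 / 3

lemma re_airyPhase_add_mul {c : ℂ} (hre : c.re = 1 / 2) (him : c.im ^ 2 = 3 / 4)
    (x s u : ℝ) : (airyPhase x (s + c * u)).re = airyPhaseRe x s u := by
  simp only [airyPhase, airyPhaseRe, pow_succ, pow_zero, one_mul, Complex.sub_re,
    Complex.div_ofNat_re, Complex.mul_re, Complex.mul_im, Complex.add_re, Complex.add_im,
    Complex.ofReal_re, Complex.ofReal_im, hre]
  linear_combination (-(s * u ^ 2) - u ^ 3 / 2) * him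

lemma cubic_bddAbove (a b c : ℝ) : ∃ E, ∀ u : ℝ, 0 ≤ u → a + b * u + c * u ^ 2 - u ^ 3 / 3 ≤ E := by
  set k := |b| + |c|
  refine ⟨a + |b| + 4 * k ^ 3 / 3, fun u hu => ?_⟩
  have hk : 0 ≤ k := by positivity
  have hb : b * u ≤ |b| + |b| * u ^ 2 := by
    nlinarith [le_abs_self b, abs_nonneg b, sq_nonneg (u - 1)]
  have hc : c * u ^ 2 ≤ |c| * u ^ 2 := by nlinarith [le_abs_self c, sq_nonneg u]
  -- the maximum of `k u² - u³/3` on `[0, ∞)` is attained at `u = 2k`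
  have hcubic : k * u ^ 2 ≤ u ^ 3 / 3 + 4 * k ^ 3 / 3 := by
    nlinarith [mul_nonneg (sq_nonneg (u - 2 * k)) (add_nonneg hu hk)]
  nlinarith

lemma exists_airyPhaseRe_add_le (x m : ℝ) :
    ∃ E, ∀ s u : ℝ, |s| ≤ m → 0 ≤ u → airyPhaseRe x s u + ((m + u) ^ 2 + |x|) ≤ E - u := by
  obtain ⟨E, hE⟩ := cubic_bddAbove (m ^ 3 / 3 + |x| * m + m ^ 2 + |x|)
    (m ^ 2 / 2 + 2 * m + |x| / 2 + 1) (m / 2 + 1)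
  refine ⟨E, fun s u hs hu => ?_⟩
  obtain ⟨hms, hsm⟩ := abs_le.1 hs
  have hm : 0 ≤ m := (abs_nonneg s).trans hs
  have hx : -x ≤ |x| := neg_le_abs x
  have h3 : s ^ 3 ≤ m ^ 3 := by nlinarith [sq_nonneg (s + m), sq_nonneg (s - m)]
  have h2 : s ^ 2 * u ≤ m ^ 2 * u := mul_le_mul_of_nonneg_right (sq_le_sq' hms hsm) hu
  have h1 : -s * u ^ 2 ≤ m * u ^ 2 := mul_le_mul_of_nonneg_right (by linarith) (sq_nonneg u)
  have hxs : -x * s ≤ |x| * m := by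
    calc -x * s ≤ |x * s| := by rw [neg_mul]; exact neg_le_abs _
      _ ≤ |x| * m := by rw [abs_mul]; exact mul_le_mul_of_nonneg_left hs (abs_nonneg x)
  have hxu : -x * u ≤ |x| * u := mul_le_mul_of_nonneg_right hx hu
  have := hE u hu
  simp only [airyPhaseRe]
  nlinarith

lemma airyPhaseRe_sq_le {a : ℝ} (ha : 0 ≤ a) (u : ℝ) :
    airyPhaseRe (a ^ 2) a u ≤ -(2 / 3) * a ^ 3 - u ^ 3 / 3 := by
  have : 0 ≤ a * u ^ 2 := by positivity
  simp only [airyPhaseRe]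
  linarith

lemma hasDerivAt_cexp_airyPhase (x : ℝ) (w : ℂ) :
    HasDerivAt (fun w => cexp (airyPhase x w)) ((w ^ 2 - x) * cexp (airyPhase x w)) w := by
  have h : HasDerivAt (airyPhase x) ((3 : ℕ) * w ^ 2 / 3 - x * 1) w :=
    ((hasDerivAt_pow 3 w).div_const 3).sub ((hasDerivAt_id w).const_mul (x : ℂ))
  rw [show ((3 : ℕ) * w ^ 2 / 3 - x * 1 : ℂ) = w ^ 2 - x by push_cast; ring] at h
  simpa [mul_comm] using h.cexp

lemma exists_norm_cexp_airyPhase_le (x m : ℝ) :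
    ∃ C, ∀ c : ℂ, c.re = 1 / 2 → c.im ^ 2 = 3 / 4 → ∀ s u : ℝ, |s| ≤ m → 0 ≤ u →
      ‖cexp (airyPhase x (s + c * u))‖ ≤ C * Real.exp (-u) ∧
      ‖((s + c * u) ^ 2 - x) * cexp (airyPhase x (s + c * u))‖ ≤ C * Real.exp (-u) := by
  obtain ⟨E, hE⟩ := exists_airyPhaseRe_add_le x m
  refine ⟨Real.exp E, fun c hre him s u hs hu => ?_⟩
  have hnorm : ‖cexp (airyPhase x (s + c * u))‖ = Real.exp (airyPhaseRe x s u) := by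
    rw [Complex.norm_exp, re_airyPhase_add_mul hre him]
  have hdecay :
      Real.exp (airyPhaseRe x s u + ((m + u) ^ 2 + |x|)) ≤ Real.exp E * Real.exp (-u) := by
    rw [← Real.exp_add, ← sub_eq_add_neg]
    exact Real.exp_le_exp.2 (hE s u hs hu)
  have hpoly : ‖(s + c * u : ℂ) ^ 2 - x‖ ≤ (m + u) ^ 2 + |x| := by
    have hz : ‖(s + c * u : ℂ)‖ ≤ m + u := by
      calc ‖(s + c * u : ℂ)‖ ≤ ‖(s : ℂ)‖ + ‖c‖ * ‖(u : ℂ)‖ :=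
            (norm_add_le _ _).trans_eq (by rw [norm_mul])
        _ ≤ m + u := by
          rw [norm_eq_one_of_re_eq_half hre him, Complex.norm_real, Complex.norm_real,
            Real.norm_eq_abs, Real.norm_eq_abs, abs_of_nonneg hu, one_mul]
          linarith
    calc ‖(s + c * u : ℂ) ^ 2 - x‖ ≤ ‖(s + c * u : ℂ)‖ ^ 2 + ‖(x : ℂ)‖ :=
          (norm_sub_le _ _).trans_eq (by rw [norm_pow])
      _ ≤ (m + u) ^ 2 + |x| := by
          rw [Complex.norm_real, Real.norm_eq_abs]
          gcongr
  constructor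
  · calc ‖cexp (airyPhase x (s + c * u))‖ ≤ Real.exp (airyPhaseRe x s u + ((m + u) ^ 2 + |x|)) := by
          rw [hnorm]
          exact Real.exp_le_exp.2 (le_add_of_nonneg_right (by positivity))
      _ ≤ _ := hdecay
  · calc ‖((s + c * u) ^ 2 - x) * cexp (airyPhase x (s + c * u))‖
        ≤ Real.exp ((m + u) ^ 2 + |x|) * Real.exp (airyPhaseRe x s u) := by
          rw [norm_mul, hnorm]
          gcongr
          linarith [Real.add_one_le_exp ((m + u) ^ 2 + |x|)]
      _ ≤ _ := by rw [← Real.exp_add, add_comm]; exact hdecay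

lemma hasDerivAt_cexp_airyPhase_line (x : ℝ) (a d : ℂ) (t : ℝ) :
    HasDerivAt (fun t : ℝ => cexp (airyPhase x (a + d * t)))
      (d * (((a + d * t) ^ 2 - x) * cexp (airyPhase x (a + d * t)))) t := by
  have hline : HasDerivAt (fun t : ℂ => a + d * t) d t := by
    simpa using ((hasDerivAt_id (t : ℂ)).const_mul d).const_add a
  rw [mul_comm]
  exact ((hasDerivAt_cexp_airyPhase x _).comp (t : ℂ) hline).comp_ofReal

noncomputable def airyIntegrand (x s u : ℝ) : ℂ :=
  eP * cexp (airyPhase x (s + eP * u)) - eM * cexp (airyPhase x (s + eM * u))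

noncomputable def airyIntegrandDeriv (x s u : ℝ) : ℂ :=
  eP * (((s + eP * u) ^ 2 - x) * cexp (airyPhase x (s + eP * u))) -
    eM * (((s + eM * u) ^ 2 - x) * cexp (airyPhase x (s + eM * u)))

noncomputable def airyPrimitive (x s u : ℝ) : ℂ :=
  cexp (airyPhase x (s + eP * u)) - cexp (airyPhase x (s + eM * u))

lemma hasDerivAt_airyIntegrand (x s u : ℝ) :
    HasDerivAt (fun s => airyIntegrand x s u) (airyIntegrandDeriv x s u) s := by
  have hray (c : ℂ) : HasDerivAt (fun s : ℝ => cexp (airyPhase x (s + c * u)))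
      (((s + c * u) ^ 2 - x) * cexp (airyPhase x (s + c * u))) s := by
    simpa [add_comm] using hasDerivAt_cexp_airyPhase_line x (c * u) 1 s
  exact ((hray eP).const_mul eP).sub ((hray eM).const_mul eM)

lemma hasDerivAt_airyPrimitive (x s u : ℝ) :
    HasDerivAt (airyPrimitive x s) (airyIntegrandDeriv x s u) u :=
  (hasDerivAt_cexp_airyPhase_line x s eP u).sub (hasDerivAt_cexp_airyPhase_line x s eM u)

lemma continuous_airyIntegrand (x s : ℝ) : Continuous (airyIntegrand x s) := by
  unfold airyIntegrand airyPhase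
  fun_prop

lemma continuous_airyIntegrandDeriv (x s : ℝ) : Continuous (airyIntegrandDeriv x s) := by
  unfold airyIntegrandDeriv airyPhase
  fun_prop

lemma exists_norm_airyIntegrand_le (x m : ℝ) :
    ∃ C, ∀ s u : ℝ, |s| ≤ m → 0 ≤ u →
      ‖airyIntegrand x s u‖ ≤ C * Real.exp (-u) ∧
      ‖airyIntegrandDeriv x s u‖ ≤ C * Real.exp (-u) ∧
      ‖airyPrimitive x s u‖ ≤ C * Real.exp (-u) := by
  obtain ⟨C, hC⟩ := exists_norm_cexp_airyPhase_le x m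
  refine ⟨2 * C, fun s u hs hu => ?_⟩
  obtain ⟨hP, hP'⟩ := hC eP eP_re eP_im_sq s u hs hu
  obtain ⟨hM, hM'⟩ := hC eM eM_re eM_im_sq s u hs hu
  have hnP (z : ℂ) : ‖eP * z‖ = ‖z‖ := by
    rw [norm_mul, norm_eq_one_of_re_eq_half eP_re eP_im_sq, one_mul]
  have hnM (z : ℂ) : ‖eM * z‖ = ‖z‖ := by
    rw [norm_mul, norm_eq_one_of_re_eq_half eM_re eM_im_sq, one_mul]
  refine ⟨(norm_sub_le _ _).trans ?_, (norm_sub_le _ _).trans ?_, (norm_sub_le _ _).trans ?_⟩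
  · rw [hnP, hnM]; linarith
  · rw [hnP, hnM]; linarith
  · linarith

lemma integrableOn_Ioi_of_norm_le_mul_exp_neg {E : Type*} [NormedAddCommGroup E] {f : ℝ → E}
    (hf : Continuous f) {C : ℝ} (hC : ∀ u, 0 ≤ u → ‖f u‖ ≤ C * Real.exp (-u)) :
    IntegrableOn f (Ioi 0) := by
  refine ((integrableOn_exp_neg_Ioi 0).const_mul C).mono' hf.aestronglyMeasurable ?_
  filter_upwards [ae_restrict_mem measurableSet_Ioi] with u hu
  exact hC u (le_of_lt hu)

lemma integrableOn_airyIntegrand (x s : ℝ) : IntegrableOn (airyIntegrand x s) (Ioi 0) := by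
  obtain ⟨C, hC⟩ := exists_norm_airyIntegrand_le x |s|
  exact integrableOn_Ioi_of_norm_le_mul_exp_neg (continuous_airyIntegrand x s)
    fun u hu => (hC s u le_rfl hu).1

/-- `airyPrimitive x s` is a primitive in `u` that vanishes at `u = 0` and at infinity. -/
lemma integral_airyIntegrandDeriv (x s : ℝ) : ∫ u in Ioi 0, airyIntegrandDeriv x s u = 0 := by
  obtain ⟨C, hC⟩ := exists_norm_airyIntegrand_le x |s|
  have hint : IntegrableOn (airyIntegrandDeriv x s) (Ioi 0) :=
    integrableOn_Ioi_of_norm_le_mul_exp_neg (continuous_airyIntegrandDeriv x s)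
      fun u hu => (hC s u le_rfl hu).2.1
  have htendsto : Tendsto (airyPrimitive x s) atTop (𝓝 0) := by
    refine squeeze_zero_norm' ?_ (by simpa using Real.tendsto_exp_neg_atTop_nhds_zero.const_mul C)
    filter_upwards [eventually_ge_atTop 0] with u hu
    exact (hC s u le_rfl hu).2.2
  rw [integral_Ioi_of_hasDerivAt_of_tendsto' (fun u _ => hasDerivAt_airyPrimitive x s u) hint
    htendsto]
  simp [airyPrimitive]

lemma hasDerivAt_integral_airyIntegrand (x s₀ : ℝ) :
    HasDerivAt (fun s => ∫ u in Ioi 0, airyIntegrand x s u) 0 s₀ := by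
  obtain ⟨C, hC⟩ := exists_norm_airyIntegrand_le x (|s₀| + 1)
  have hball : ∀ s ∈ Metric.ball s₀ 1, |s| ≤ |s₀| + 1 := fun s hs => by
    rw [Metric.mem_ball, Real.dist_eq] at hs
    linarith [abs_sub_abs_le_abs_sub s s₀]
  have h := hasDerivAt_integral_of_dominated_loc_of_deriv_le (μ := volume.restrict (Ioi 0))
    (bound := fun u => C * Real.exp (-u)) (Metric.ball_mem_nhds s₀ one_pos)
    (.of_forall fun s => (continuous_airyIntegrand x s).aestronglyMeasurable)
    (integrableOn_airyIntegrand x s₀) (continuous_airyIntegrandDeriv x s₀).aestronglyMeasurable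
    ?_ ((integrableOn_exp_neg_Ioi 0).const_mul C)
    (.of_forall fun u s _ => hasDerivAt_airyIntegrand x s u)
  · rw [← integral_airyIntegrandDeriv x s₀]
    exact h.2
  · filter_upwards [ae_restrict_mem measurableSet_Ioi] with u hu s hs
    exact (hC s u (hball s hs) (le_of_lt hu)).2.1

lemma integral_airyIntegrand_eq (x s t : ℝ) :
    ∫ u in Ioi 0, airyIntegrand x s u = ∫ u in Ioi 0, airyIntegrand x t u :=
  is_const_of_deriv_eq_zero (fun s => (hasDerivAt_integral_airyIntegrand x s).differentiableAt)
    (fun s => (hasDerivAt_integral_airyIntegrand x s).deriv) s t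

lemma Ai_eq_integral_airyIntegrand (x : ℝ) :
    Ai x = (2 * Real.pi * Complex.I)⁻¹ * ∫ u in Ioi 0, airyIntegrand x 0 u := by
  have hray {c : ℂ} (hre : c.re = 1 / 2) (him : c.im ^ 2 = 3 / 4) (u : ℝ) :
      airyPhase x ((0 : ℝ) + c * u) = -(u : ℂ) ^ 3 / 3 - x * (c * u) := by
    rw [airyPhase, Complex.ofReal_zero, zero_add, mul_pow,
      pow_three_eq_neg_one_of_re_eq_half hre him]
    ring
  simp only [Ai, airyIntegrand, hray eP_re eP_im_sq, hray eM_re eM_im_sq]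

lemma norm_airyIntegrand_le (x s u : ℝ) :
    ‖airyIntegrand x s u‖ ≤ 2 * Real.exp (airyPhaseRe x s u) := by
  refine (norm_sub_le _ _).trans_eq ?_
  rw [norm_mul, norm_mul, norm_eq_one_of_re_eq_half eP_re eP_im_sq,
    norm_eq_one_of_re_eq_half eM_re eM_im_sq, Complex.norm_exp, Complex.norm_exp,
    re_airyPhase_add_mul eP_re eP_im_sq, re_airyPhase_add_mul eM_re eM_im_sq]
  ring

lemma exists_norm_integral_airyIntegrand_sqrt_le :
    ∃ C > 0, ∀ x : ℝ, 0 ≤ x →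
      ‖∫ u in Ioi 0, airyIntegrand x √x u‖ ≤ C * Real.exp (-(2 / 3) * x ^ ((3 : ℝ) / 2)) := by
  obtain ⟨E, hE⟩ := cubic_bddAbove 0 1 0
  refine ⟨2 * Real.exp E, by positivity, fun x hx => ?_⟩
  set D := Real.exp (-(2 / 3) * x ^ ((3 : ℝ) / 2))
  have hx' : x = √x ^ 2 := (Real.sq_sqrt hx).symm
  have hpow : x ^ ((3 : ℝ) / 2) = √x ^ 3 := by
    rw [Real.rpow_div_two_eq_sqrt _ hx]
    exact_mod_cast Real.rpow_natCast √x 3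
  have hbound : ∀ u, 0 < u → ‖airyIntegrand x √x u‖ ≤ 2 * Real.exp E * D * Real.exp (-u) := by
    intro u hu
    have hsaddle := airyPhaseRe_sq_le (Real.sqrt_nonneg x) u
    rw [← hx'] at hsaddle
    have hcubic := hE u hu.le
    calc ‖airyIntegrand x √x u‖ ≤ 2 * Real.exp (airyPhaseRe x √x u) := norm_airyIntegrand_le x √x u
      _ ≤ 2 * Real.exp (E + -(2 / 3) * x ^ ((3 : ℝ) / 2) + -u) := by
          gcongr
          rw [hpow]
          linarith
      _ = 2 * Real.exp E * D * Real.exp (-u) := by rw [Real.exp_add, Real.exp_add]; ring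
  calc ‖∫ u in Ioi 0, airyIntegrand x √x u‖
      ≤ ∫ u in Ioi 0, 2 * Real.exp E * D * Real.exp (-u) :=
        norm_integral_le_of_norm_le ((integrableOn_exp_neg_Ioi 0).const_mul _)
          ((ae_restrict_mem measurableSet_Ioi).mono hbound)
    _ = 2 * Real.exp E * D := by rw [integral_const_mul, integral_exp_neg_Ioi_zero, mul_one]

/-- Exponential decay of the Airy function on the positive half-line:
there is `C > 0` with `|Ai(x)| ≤ C e^{−(2/3)x^{3/2}}` for all `x ≥ 0`. -/
theorem airy_exponential_decay :
    ∃ C > (0 : ℝ), ∀ x : ℝ, 0 ≤ x →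
      ‖Ai x‖ ≤ C * Real.exp (-(2 / 3) * x ^ ((3 : ℝ) / 2)) := by
  obtain ⟨C, hC, hbound⟩ := exists_norm_integral_airyIntegrand_sqrt_le
  refine ⟨C / (2 * Real.pi), by positivity, fun x hx => ?_⟩
  have hnorm : ‖(2 * Real.pi * Complex.I : ℂ)⁻¹‖ = (2 * Real.pi)⁻¹ := by
    simp [abs_of_pos Real.pi_pos]
  rw [Ai_eq_integral_airyIntegrand, integral_airyIntegrand_eq x 0 √x, norm_mul, hnorm,
    div_mul_eq_mul_div, inv_mul_eq_div]
  gcongr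
  exact hbound x hx
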